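/- Let n > 3, let G be a group, let s_0, s_1, …, s_{n-1} ∈ G satisfy the type B Coxeter relations, and define r_ℓ = s_0 (s_1 s_0) (s_2 s_1 s_0) ⋯ (s_{ℓ-1} s_{ℓ-2} ⋯ s_1 s_0) for ℓ ∈ [1,n]. Then for every k ∈ [1,n-2] and every ℓ ∈ [k+1,n], s_k r_ℓ = r_ℓ s_{ℓ-k}. -/

import Mathlib

/-!
Write `c j = s (j-1) ⋯ s 1 s 0`, so that `rwordB s l = c 1 ⋯ c l`, and read `s k * r = r * s k'`
as `SemiconjBy r (s k') (s k)`, which composes along products. By the braid relation, `s k`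
passes through `c j` (for `k + 2 ≤ j`) at the cost of becoming `s (k+1)`; this gives the induction
step `l → l + 1`. For the base case `l = k + 1`, `s k` commutes with `c 1 ⋯ c (k-1)`, and
`c k * c (k+1)` conjugates `s 1` into `s k`: since
`c (k+1) * c (k+2) = s k * s (k+1) * (c k * c (k+1))`, this follows by induction on `k` from the
braid relation, starting from `s 0 s 1 s 0 s 1 = s 1 s 0 s 1 s 0`.
-/

/-- The word `s₀ (s₁ s₀) (s₂ s₁ s₀) ⋯ (s_{k-1} s_{k-2} ⋯ s₁ s₀)` in a group. -/
def rwordB {G : Type*} [Group G] (s : ℕ → G) (k : ℕ) : G :=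
  ((List.range k).map (fun j => ((List.range (j + 1)).map (fun i => s (j - i))).prod)).prod

section Coxeter

variable {G : Type*} [Group G] {a b : G}

theorem commute_of_mul_pow_two_eq_one (ha : a * a = 1) (hb : b * b = 1) (h : (a * b) ^ 2 = 1) :
    Commute a b := by
  have hinv := eq_inv_of_mul_eq_one_left (by simpa [pow_two] using h)
  rw [mul_inv_rev, inv_eq_of_mul_eq_one_left ha, inv_eq_of_mul_eq_one_left hb] at hinv
  exact hinv

theorem braid_of_mul_pow_three_eq_one (ha : a * a = 1) (hb : b * b = 1) (h : (a * b) ^ 3 = 1) :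
    a * b * a = b * a * b := by
  have hinv := eq_inv_of_mul_eq_one_left (a := a * b * a) (b := b * a * b)
    (by simpa [pow_succ, mul_assoc] using h)
  simpa [mul_inv_rev, inv_eq_of_mul_eq_one_left ha, inv_eq_of_mul_eq_one_left hb, mul_assoc]
    using hinv

theorem four_braid_of_mul_pow_four_eq_one (ha : a * a = 1) (hb : b * b = 1)
    (h : (a * b) ^ 4 = 1) : a * b * a * b = b * a * b * a := by
  have hinv := eq_inv_of_mul_eq_one_left (a := a * b * a * b) (b := a * b * a * b)
    (by simpa [pow_succ, mul_assoc] using h)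
  simpa [mul_inv_rev, inv_eq_of_mul_eq_one_left ha, inv_eq_of_mul_eq_one_left hb, mul_assoc]
    using hinv

end Coxeter

section Braid

variable {M : Type*} [Monoid M]

structure BraidRelationsB (s : ℕ → M) (n : ℕ) : Prop where
  four_braid : s 0 * s 1 * s 0 * s 1 = s 1 * s 0 * s 1 * s 0
  braid : ∀ i, 1 ≤ i → i + 1 < n → s i * s (i + 1) * s i = s (i + 1) * s i * s (i + 1)
  commute : ∀ i j, i + 2 ≤ j → j < n → Commute (s i) (s j)

def descProd (s : ℕ → M) : ℕ → M
  | 0 => 1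
  | j + 1 => s j * descProd s j

theorem prod_map_range_succ_eq_descProd (s : ℕ → M) (j : ℕ) :
    ((List.range (j + 1)).map fun i => s (j - i)).prod = descProd s (j + 1) := by
  induction j with
  | zero => simp [descProd]
  | succ j ih =>
    rw [List.range_succ_eq_map, List.map_cons, List.map_map, List.prod_cons, descProd, ← ih]
    congr 2
    exact List.map_congr_left fun i _ => by simp

theorem descProd_succ_mul_descProd_succ_succ {s : ℕ → M} {k : ℕ}
    (h : Commute (s (k + 1)) (descProd s k)) :
    descProd s (k + 1) * descProd s (k + 2) =
      s k * s (k + 1) * (descProd s k * descProd s (k + 1)) := by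
  simp only [descProd, mul_assoc, ← h.left_comm]

namespace BraidRelationsB

variable {s : ℕ → M} {n : ℕ}

theorem commute_descProd (h : BraidRelationsB s n) {j k : ℕ} (hjk : j < k) (hk : k < n) :
    Commute (s k) (descProd s j) := by
  induction j with
  | zero => exact Commute.one_right _
  | succ j ih => exact ((h.commute j k (by omega) hk).symm).mul_right (ih (by omega))

theorem semiconjBy_descProd_succ (h : BraidRelationsB s n) {j k : ℕ} (hk : 1 ≤ k)
    (hkj : k + 2 ≤ j) (hj : j ≤ n) : SemiconjBy (descProd s j) (s (k + 1)) (s k) := by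
  induction j, hkj using Nat.le_induction with
  | base =>
    have hbraid : SemiconjBy (s (k + 1) * s k) (s (k + 1)) (s k) := by
      simpa only [SemiconjBy, mul_assoc] using (h.braid k hk (by omega)).symm
    simpa only [descProd, mul_assoc] using
      hbraid.mul_left (h.commute_descProd (Nat.lt_succ_self k) (by omega)).symm
  | succ j hkj ih =>
    exact SemiconjBy.mul_left (h.commute k j hkj (by omega)).symm (ih (by omega))

theorem semiconjBy_descProd_mul_descProd_succ (h : BraidRelationsB s n) {k : ℕ} (hk : 1 ≤ k)
    (hkn : k < n) : SemiconjBy (descProd s k * descProd s (k + 1)) (s 1) (s k) := by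
  induction k, hk using Nat.le_induction with
  | base =>
    simpa only [SemiconjBy, descProd, mul_one, mul_assoc] using h.four_braid
  | succ k hk ih =>
    rw [descProd_succ_mul_descProd_succ_succ (h.commute_descProd (Nat.lt_succ_self k) hkn)]
    have hbraid : SemiconjBy (s k * s (k + 1)) (s k) (s (k + 1)) := by
      simpa only [SemiconjBy, mul_assoc] using h.braid k hk hkn
    exact hbraid.mul_left (ih (by omega))

end BraidRelationsB

end Braid

section Word

variable {G : Type*} [Group G] {s : ℕ → G} {n : ℕ}

theorem rwordB_succ (s : ℕ → G) (l : ℕ) :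
    rwordB s (l + 1) = rwordB s l * descProd s (l + 1) := by
  rw [rwordB, List.range_succ, List.map_append, List.prod_append, ← rwordB]
  simp [prod_map_range_succ_eq_descProd]

namespace BraidRelationsB

theorem of_coxeterB (hn : 1 < n) (hB1 : ∀ i, i ≤ n - 1 → s i * s i = 1)
    (hB2 : (s 0 * s 1) ^ 4 = 1) (hB3 : ∀ i, 1 ≤ i → i ≤ n - 2 → (s i * s (i + 1)) ^ 3 = 1)
    (hB4 : ∀ i j, i ≤ n - 3 → i + 2 ≤ j → j ≤ n - 1 → (s i * s j) ^ 2 = 1) :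
    BraidRelationsB s n where
  four_braid := four_braid_of_mul_pow_four_eq_one (hB1 0 (by omega)) (hB1 1 (by omega)) hB2
  braid i hi hin :=
    braid_of_mul_pow_three_eq_one (hB1 i (by omega)) (hB1 (i + 1) (by omega)) (hB3 i hi (by omega))
  commute i j hij hj :=
    commute_of_mul_pow_two_eq_one (hB1 i (by omega)) (hB1 j (by omega))
      (hB4 i j (by omega) hij (by omega))

theorem commute_rwordB (h : BraidRelationsB s n) {j k : ℕ} (hjk : j < k) (hk : k < n) :
    Commute (s k) (rwordB s j) := by
  induction j with
  | zero => exact Commute.one_right _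
  | succ j ih =>
    rw [rwordB_succ]
    exact (ih (by omega)).mul_right (h.commute_descProd hjk hk)

theorem semiconjBy_rwordB (h : BraidRelationsB s n) {k l : ℕ} (hk : 1 ≤ k) (hkl : k < l)
    (hl : l ≤ n) : SemiconjBy (rwordB s l) (s (l - k)) (s k) := by
  induction l, hkl using Nat.le_induction with
  | base =>
    obtain ⟨m, rfl⟩ : ∃ m, k = m + 1 := ⟨k - 1, by omega⟩
    rw [rwordB_succ, rwordB_succ, mul_assoc, show m + 1 + 1 - (m + 1) = 1 by omega]
    exact SemiconjBy.mul_left (h.commute_rwordB (Nat.lt_succ_self m) (by omega)).symm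
      (h.semiconjBy_descProd_mul_descProd_succ hk (by omega))
  | succ l hkl ih =>
    rw [rwordB_succ, show l + 1 - k = l - k + 1 by omega]
    exact (ih (by omega)).mul_left (h.semiconjBy_descProd_succ (by omega) (by omega) hl)

end BraidRelationsB

end Word

theorem stmt12 (n : ℕ) (hn : 3 < n) (G : Type*) [Group G] (s : ℕ → G)
    (hB1 : ∀ i, i ≤ n - 1 → s i * s i = 1)
    (hB2 : (s 0 * s 1) ^ 4 = 1)
    (hB3 : ∀ i, 1 ≤ i → i ≤ n - 2 → (s i * s (i + 1)) ^ 3 = 1)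
    (hB4 : ∀ i j, i ≤ n - 3 → i + 2 ≤ j → j ≤ n - 1 → (s i * s j) ^ 2 = 1) :
    ∀ k l, 1 ≤ k → k ≤ n - 2 → k + 1 ≤ l → l ≤ n →
      s k * rwordB s l = rwordB s l * s (l - k) := by
  have hrel : BraidRelationsB s n := .of_coxeterB (by omega) hB1 hB2 hB3 hB4
  intro k l hk _ hkl hln
  exact (hrel.semiconjBy_rwordB hk hkl hln).eq.symm
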